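/- arXiv:1608.07148 — 2 statements merged into one kernel-verified Lean document; each statement's English description precedes it below -/
import Mathlib

section
/- Let n : [0,∞) → [0,∞) be a bounded measurable size distribution supported in [KΔt, 1] with K, Δt > 0, and let k be a nonnegative integer. Then ∫_{KΔt}^1 (s - KΔt)^{k/2} n(s) ds = Σ_{n=0}^∞ a_n^{k/2} (KΔt)^n ∫_{KΔt}^1 s^{k/2 - n} n(s) ds, i.e. the evolved fractional moment equals the series in the negative-order moments m^{[KΔt,1]}_{k/2-n}. -/
/-!
For `c < s` the binomial series gives
`(s - c) ^ α = s ^ α * (1 - c / s) ^ α = ∑ aᵢ cⁱ s ^ (α - i)`.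
For `α ≥ 0` the coefficients are absolutely summable, because for `n + 1 ≥ α` the recursion
telescopes: `|aₙ₊₁(α)| = |aₙ(α - 1)| - |aₙ₊₁(α - 1)|`. Since `cⁱ s ^ (α - i) ≤ s ^ α ≤ b ^ α` on
`(c, b]`, the series times `n s` is dominated by `∑ |aᵢ| b ^ α |n s|` and can be integrated term
by term.
-/

open Real MeasureTheory

/-- Generalized binomial coefficient series coefficient: `(1-x)^α = Σ aₙ xⁿ`,
`aₙ = (-1)ⁿ binom(α, n)`. -/
noncomputable def binSeriesCoeff (α : ℝ) (n : ℕ) : ℝ :=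
  (-1) ^ n * (∏ i ∈ Finset.range n, (α - i)) / (n.factorial : ℝ)

open Set

lemma binSeriesCoeff_succ_mul (α : ℝ) (n : ℕ) :
    binSeriesCoeff α (n + 1) * (n + 1) = binSeriesCoeff α n * (n - α) := by
  rw [binSeriesCoeff, binSeriesCoeff, Finset.prod_range_succ, Nat.factorial_succ]
  push_cast
  field_simp
  ring

lemma binSeriesCoeff_succ_mul_eq_sub_one (α : ℝ) (n : ℕ) :
    binSeriesCoeff α (n + 1) * (n + 1) = -α * binSeriesCoeff (α - 1) n := by
  have hprod : ∏ i ∈ Finset.range (n + 1), (α - i) = α * ∏ i ∈ Finset.range n, (α - 1 - i) := by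
    rw [Finset.prod_range_succ', mul_comm]
    congr 1
    · simp
    · exact Finset.prod_congr rfl fun i _ => by push_cast; ring
  rw [binSeriesCoeff, binSeriesCoeff, hprod, Nat.factorial_succ]
  push_cast
  field_simp
  ring

lemma abs_binSeriesCoeff_succ_eq_sub {α : ℝ} (hα : 0 ≤ α) {n : ℕ} (hn : α ≤ n + 1) :
    |binSeriesCoeff α (n + 1)| =
      |binSeriesCoeff (α - 1) n| - |binSeriesCoeff (α - 1) (n + 1)| := by
  have hn1 : (0 : ℝ) < n + 1 := by positivity
  have hsub := congrArg abs (binSeriesCoeff_succ_mul_eq_sub_one α n)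
  have hrec := congrArg abs (binSeriesCoeff_succ_mul (α - 1) n)
  rw [abs_mul, abs_of_pos hn1] at hsub hrec
  rw [abs_mul, abs_of_nonneg (by linarith : (0 : ℝ) ≤ n - (α - 1))] at hrec
  rw [abs_mul, abs_neg, abs_of_nonneg hα] at hsub
  refine mul_right_cancel₀ hn1.ne' ?_
  linear_combination hsub + hrec

lemma summable_abs_binSeriesCoeff {α : ℝ} (hα : 0 ≤ α) :
    Summable fun n => |binSeriesCoeff α n| := by
  obtain ⟨N, hN⟩ := exists_nat_ge α
  set b : ℕ → ℝ := fun m => |binSeriesCoeff (α - 1) (N + m)|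
  have htail : ∀ m, ∑ j ∈ Finset.range m, |binSeriesCoeff α (j + (N + 1))| = b 0 - b m := by
    intro m
    rw [← Finset.sum_range_sub' b m]
    refine Finset.sum_congr rfl fun j _ => ?_
    rw [show j + (N + 1) = N + j + 1 by ring]
    exact abs_binSeriesCoeff_succ_eq_sub hα (by push_cast; linarith)
  refine (summable_nat_add_iff (N + 1)).mp <|
    summable_of_sum_range_le (c := b 0) (fun _ => abs_nonneg _) fun m => ?_
  rw [htail]
  exact sub_le_self _ (abs_nonneg _)

lemma binSeriesCoeff_eq_neg_one_pow_mul_choose (α : ℝ) (n : ℕ) :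
    binSeriesCoeff α n = (-1) ^ n * Ring.choose α n := by
  rw [binSeriesCoeff, Ring.choose_eq_smul, ← Polynomial.aeval_eq_smeval, Polynomial.aeval_def,
    Polynomial.eval₂_eq_eval_map, descPochhammer_map, descPochhammer_eval_eq_prod_range,
    smul_eq_mul]
  ring

lemma hasSum_binSeriesCoeff_mul_pow (α : ℝ) {x : ℝ} (hx : |x| < 1) :
    HasSum (fun n => binSeriesCoeff α n * x ^ n) ((1 - x) ^ α) := by
  have h := one_add_rpow_hasFPowerSeriesOnBall_zero (a := α) |>.hasSum (y := -x)
    (by simpa [edist_dist, ← ofReal_norm] using hx)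
  simp only [binomialSeries, FormalMultilinearSeries.ofScalars_apply_eq, smul_eq_mul,
    ← sub_eq_add_neg, zero_sub] at h
  refine h.congr_fun fun n => ?_
  rw [binSeriesCoeff_eq_neg_one_pow_mul_choose, neg_pow]
  ring

lemma hasSum_binSeriesCoeff_mul_pow_mul_rpow (α : ℝ) {c s : ℝ} (hc : 0 ≤ c) (hcs : c < s) :
    HasSum (fun i : ℕ => binSeriesCoeff α i * c ^ i * s ^ (α - i)) ((s - c) ^ α) := by
  have hs : 0 < s := hc.trans_lt hcs
  have hx : |c / s| < 1 := by
    rw [abs_of_nonneg (by positivity)]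
    exact (div_lt_one hs).mpr hcs
  have h := (hasSum_binSeriesCoeff_mul_pow α hx).mul_right (s ^ α)
  rw [← mul_rpow (by linarith [hx.le, le_abs_self (c / s)]) hs.le, one_sub_mul,
    div_mul_cancel₀ _ hs.ne'] at h
  refine h.congr_fun fun i => ?_
  rw [rpow_sub hs, rpow_natCast, div_pow]
  field_simp

lemma pow_mul_rpow_sub_le_rpow (α : ℝ) (i : ℕ) {c s : ℝ} (hc : 0 ≤ c) (hcs : c ≤ s) (hs : 0 < s) :
    c ^ i * s ^ (α - i) ≤ s ^ α := by
  rw [rpow_sub hs, rpow_natCast, mul_div_left_comm, ← div_pow]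
  exact mul_le_of_le_one_right (rpow_nonneg hs.le _)
    (pow_le_one₀ (by positivity) ((div_le_one hs).mpr hcs))

theorem hasSum_integral_binSeriesCoeff_mul_rpow {α c b : ℝ} (hα : 0 ≤ α) (hc : 0 < c)
    {n : ℝ → ℝ} (hn : IntegrableOn n (Ioc c b)) :
    HasSum (fun i : ℕ => binSeriesCoeff α i * c ^ i * ∫ s in Ioc c b, s ^ (α - i) * n s)
      (∫ s in Ioc c b, (s - c) ^ α * n s) := by
  simp_rw [← integral_const_mul, ← mul_assoc]
  refine hasSum_integral_of_dominated_convergence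
    (fun i s => |binSeriesCoeff α i| * (b ^ α * ‖n s‖)) (fun i => ?_) (fun i => ?_)
    (ae_of_all _ fun s => (summable_abs_binSeriesCoeff hα).mul_right _) ?_ ?_
  · exact ((measurable_id.pow_const _).aestronglyMeasurable.const_mul _).mul
      hn.aestronglyMeasurable
  · filter_upwards [ae_restrict_mem measurableSet_Ioc] with s ⟨hcs, hsb⟩
    have hs : 0 < s := hc.trans hcs
    rw [norm_mul, norm_mul, norm_mul, norm_of_nonneg (by positivity : 0 ≤ c ^ i),
      norm_of_nonneg (rpow_nonneg hs.le _), Real.norm_eq_abs, mul_assoc, mul_assoc,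
      ← mul_assoc (c ^ i)]
    have hbound : c ^ i * s ^ (α - i) ≤ b ^ α :=
      (pow_mul_rpow_sub_le_rpow α i hc.le hcs.le hs).trans (rpow_le_rpow hs.le hsb hα)
    gcongr
  · simp_rw [tsum_mul_right]
    exact (hn.norm.const_mul _).const_mul _
  · filter_upwards [ae_restrict_mem measurableSet_Ioc] with s hs
    exact (hasSum_binSeriesCoeff_mul_pow_mul_rpow α hc.le hs.1).mul_right _

theorem evolved_fractional_moment_series_general (K Δt : ℝ) (hK : 0 < K) (hΔt : 0 < Δt)
    (n : ℝ → ℝ) (hmeas : Measurable n) (hpos : ∀ s, 0 ≤ n s)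
    (hbdd : ∃ C, ∀ s, n s ≤ C) (k : ℕ) :
    HasSum
      (fun i : ℕ => binSeriesCoeff ((k : ℝ) / 2) i * (K * Δt) ^ i *
        ∫ s in Set.Icc (K * Δt) 1, s ^ ((k : ℝ) / 2 - i) * n s)
      (∫ s in Set.Icc (K * Δt) 1, (s - K * Δt) ^ ((k : ℝ) / 2) * n s) := by
  obtain ⟨C, hC⟩ := hbdd
  have hn : IntegrableOn n (Ioc (K * Δt) 1) :=
    Integrable.of_bound hmeas.aestronglyMeasurable C
      (ae_of_all _ fun s => by rw [norm_of_nonneg (hpos s)]; exact hC s)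
  simp_rw [integral_Icc_eq_integral_Ioc]
  exact hasSum_integral_binSeriesCoeff_mul_rpow (by positivity) (mul_pos hK hΔt) hn

/-- The evolved fractional moment `∫ (s-KΔt)^{k/2} n(s) ds` equals the series
`Σₙ aₙ^{k/2} (KΔt)ⁿ m^{[KΔt,1]}_{k/2-n}` in the (possibly negative order) fractional moments
of the size distribution on `[KΔt,1]`. -/
theorem evolved_fractional_moment_series (K Δt : ℝ) (hK : 0 < K) (hΔt : 0 < Δt)
    (h1 : K * Δt ≤ 1) (n : ℝ → ℝ) (hmeas : Measurable n) (hpos : ∀ s, 0 ≤ n s)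
    (hbdd : ∃ C, ∀ s, n s ≤ C)
    (hsupp : Function.support n ⊆ Set.Icc (K * Δt) 1) (k : ℕ) :
    HasSum
      (fun i : ℕ => binSeriesCoeff ((k : ℝ) / 2) i * (K * Δt) ^ i *
        ∫ s in Set.Icc (K * Δt) 1, s ^ ((k : ℝ) / 2 - i) * n s)
      (∫ s in Set.Icc (K * Δt) 1, (s - K * Δt) ^ ((k : ℝ) / 2) * n s) :=
  evolved_fractional_moment_series_general K Δt hK hΔt n hmeas hpos hbdd k
end

section
/- Suppose the vector (m₀, m_{1/2}, …, m_{N/2}) is in the interior of the fractional moment space, i.e. there exists a nonnegative integrable f on [0,1], f ≢ 0, with m_{k/2} = ∫₀¹ s^{k/2} f(s) ds for k = 0,…,N, and such that f is positive on a set of positive measure in every subinterval. Then the function G(λ) = ∫₀¹ exp(−λ₀ − Σ_{i=1}^N λ_i S^{i/2}) dS + Σ_{k=0}^N λ_k m_{k/2} is continuous on ℝ^{N+1} and G(λ) → +∞ as ‖λ‖ → +∞. -/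
open Real MeasureTheory Filter

open Set Polynomial

/-! Write `Q_λ(s) = ∑ λₗ s^(l/2)`, so that `G(λ) = ∫₀¹ exp (-Q_λ) + ⟪λ, m⟫`. The tangent-line
bound `exp y ≥ K y⁺ - K log K` gives `G(λ) ≥ K ∫₀¹ Q_λ⁻ + ⟪λ, m⟫ - K log K`, and the first two
terms are positively homogeneous in `λ`. By compactness of the unit sphere they dominate `c ‖λ‖`
for a suitable `K`, provided that for every `α ≠ 0` either `Q_α` is somewhere negative on `[0, 1]`
or `⟪α, m⟫ = ∫₀¹ Q_α f > 0`. This holds because a nonzero `Q_α` (a polynomial in `√s`) that is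
nonnegative on `[0, 1]` is positive on a subinterval, on which `f` is positive on a set of
positive measure. -/

theorem exists_mul_norm_le_of_posHomogeneous {E : Type*} [NormedAddCommGroup E]
    [NormedSpace ℝ E] [FiniteDimensional ℝ E] [Nontrivial E] {p M : E → ℝ} (hp : Continuous p)
    (hM : Continuous M) (hp_nonneg : ∀ v, 0 ≤ p v)
    (hp_smul : ∀ t : ℝ, 0 ≤ t → ∀ v, p (t • v) = t * p v)
    (hM_smul : ∀ t : ℝ, 0 ≤ t → ∀ v, M (t • v) = t * M v)
    (hpos : ∀ v ≠ 0, 0 < max (p v) (M v)) :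
    ∃ c > 0, ∃ K ≥ 1, ∀ v, c * ‖v‖ ≤ K * p v + M v := by
  have hS := isCompact_sphere (0 : E) 1
  have hS_ne : (Metric.sphere (0 : E) 1).Nonempty := NormedSpace.sphere_nonempty.2 zero_le_one
  obtain ⟨v₀, hv₀, hv₀_min⟩ := hS.exists_isMinOn hS_ne (hp.max hM).continuousOn
  obtain ⟨v₁, -, hv₁_min⟩ := hS.exists_isMinOn hS_ne hM.continuousOn
  set c := max (p v₀) (M v₀)
  have hc : 0 < c := hpos v₀ (ne_zero_of_mem_unit_sphere ⟨v₀, hv₀⟩)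
  -- on the sphere either `M ≥ c`, or `p ≥ c` and then `K * p ≥ c + |min M|`
  set K := 1 + |M v₁| / c
  have hK : 1 ≤ K := by simp only [K]; linarith [div_nonneg (abs_nonneg (M v₁)) hc.le]
  have hsphere : ∀ u ∈ Metric.sphere (0 : E) 1, c ≤ K * p u + M u := by
    intro u hu
    rcases le_max_iff.1 (isMinOn_iff.1 hv₀_min u hu) with h | h
    · have : |M v₁| / c * c = |M v₁| := div_mul_cancel₀ _ hc.ne'
      nlinarith [neg_abs_le (M v₁), isMinOn_iff.1 hv₁_min u hu]
    · nlinarith [hp_nonneg u]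
  refine ⟨c, hc, K, hK, fun v => ?_⟩
  obtain ⟨u, hu, hvu⟩ : ∃ u ∈ Metric.sphere (0 : E) 1, v = ‖v‖ • u := by
    rcases eq_or_ne v 0 with rfl | hv
    · exact ⟨v₀, hv₀, by simp⟩
    · refine ⟨‖v‖⁻¹ • v, by simp [norm_smul, hv], ?_⟩
      rw [smul_smul, mul_inv_cancel₀ (norm_ne_zero_iff.2 hv), one_smul]
  have := mul_le_mul_of_nonneg_left (hsphere u hu) (norm_nonneg v)
  conv_rhs => rw [hvu, hp_smul _ (norm_nonneg v), hM_smul _ (norm_nonneg v)]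
  linarith

theorem mul_posPart_sub_mul_log_le_exp {K : ℝ} (hK : 1 ≤ K) (y : ℝ) :
    K * y⁺ - K * log K ≤ exp y := by
  have hK0 : 0 < K := by linarith
  have htangent : K * (y - log K + 1) ≤ exp y := by
    have := add_one_le_exp (y - log K)
    rw [exp_sub, exp_log hK0, le_div_iff₀ hK0] at this
    linarith
  rcases le_total 0 y with hy | hy
  · rw [posPart_eq_self.2 hy]; linarith
  · rw [posPart_eq_zero.2 hy]; nlinarith [log_nonneg hK, exp_pos y]

theorem mul_integral_negPart_sub_le_integral_exp {X : Type*} [MeasurableSpace X] {μ : Measure X}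
    [IsProbabilityMeasure μ] {g : X → ℝ} (hg : Integrable (fun x => (g x)⁻) μ)
    (hexp : Integrable (fun x => exp (-g x)) μ) {K : ℝ} (hK : 1 ≤ K) :
    K * ∫ x, (g x)⁻ ∂μ - K * log K ≤ ∫ x, exp (-g x) ∂μ := by
  calc K * ∫ x, (g x)⁻ ∂μ - K * log K = ∫ x, (K * (g x)⁻ - K * log K) ∂μ := by
        rw [integral_sub (hg.const_mul K) (integrable_const _), integral_const_mul]; simp
    _ ≤ ∫ x, exp (-g x) ∂μ := integral_mono ((hg.const_mul K).sub (integrable_const _)) hexp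
        fun x => by simpa [posPart_neg] using mul_posPart_sub_mul_log_le_exp hK (-g x)

theorem negPart_mul_of_nonneg {t : ℝ} (ht : 0 ≤ t) (x : ℝ) : (t * x)⁻ = t * x⁻ := by
  rw [negPart_def, negPart_def, mul_max_of_nonneg _ _ ht]; simp


theorem exists_Icc_subset_of_isOpen {U : Set ℝ} (hU : IsOpen U) {p q x : ℝ} (hpq : p < q)
    (hx : x ∈ Icc p q) (hxU : x ∈ U) : ∃ a b, p < a ∧ a < b ∧ b < q ∧ Icc a b ⊆ U := by
  rw [← closure_Ioo hpq.ne] at hx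
  obtain ⟨y, hyU, hy⟩ := _root_.mem_closure_iff.1 hx U hU hxU
  obtain ⟨ε, hε, hball⟩ := Metric.isOpen_iff.1 (hU.inter isOpen_Ioo) y ⟨hyU, hy⟩
  have hsub : Icc (y - ε / 2) (y + ε / 2) ⊆ U ∩ Ioo p q := by
    rw [← Real.closedBall_eq_Icc]
    exact (Metric.closedBall_subset_ball (half_lt_self hε)).trans hball
  refine ⟨y - ε / 2, y + ε / 2, (hsub ⟨le_rfl, by linarith⟩).2.1, by linarith,
    (hsub ⟨by linarith, le_rfl⟩).2.2, fun s hs => (hsub hs).1⟩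

theorem nonneg_of_setIntegral_Icc_negPart_eq_zero {g : ℝ → ℝ} (hg : Continuous g) {a b : ℝ}
    (hab : a ≠ b) (h : ∫ x in Icc a b, (g x)⁻ = 0) : ∀ x ∈ Icc a b, 0 ≤ g x := by
  have hcont : Continuous fun x => (g x)⁻ := continuous_negPart.comp hg
  rw [setIntegral_eq_zero_iff_of_nonneg_ae (ae_of_all _ fun x => negPart_nonneg (g x))
    hcont.integrableOn_Icc] at h
  intro x hx
  exact negPart_eq_zero.1
    (Measure.eqOn_Icc_of_ae_eq volume hab h hcont.continuousOn continuousOn_const hx)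

def PosOnSubintervals (f : ℝ → ℝ) : Prop :=
  ∀ a b : ℝ, 0 ≤ a → a < b → b ≤ 1 → 0 < volume {s ∈ Icc a b | 0 < f s}

theorem setIntegral_Icc_mul_pos {f g : ℝ → ℝ} (hf_int : IntegrableOn f (Icc 0 1))
    (hf_nonneg : ∀ s ∈ Icc (0 : ℝ) 1, 0 ≤ f s) (hf_pos : PosOnSubintervals f)
    (hg : Continuous g) (hg_nonneg : ∀ s ∈ Icc (0 : ℝ) 1, 0 ≤ g s) {s₀ : ℝ}
    (hs₀ : s₀ ∈ Icc (0 : ℝ) 1) (hgs₀ : 0 < g s₀) :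
    0 < ∫ s in Icc 0 1, g s * f s := by
  obtain ⟨a, b, ha, hab, hb, hsub⟩ :=
    exists_Icc_subset_of_isOpen (isOpen_lt continuous_const hg) zero_lt_one hs₀ hgs₀
  rw [setIntegral_pos_iff_support_of_nonneg_ae
    (ae_restrict_of_forall_mem measurableSet_Icc fun s hs => mul_nonneg (hg_nonneg s hs)
      (hf_nonneg s hs))
    (hf_int.continuousOn_mul hg.continuousOn isCompact_Icc)]
  refine (hf_pos a b ha.le hab hb.le).trans_le (measure_mono fun s ⟨hs, hfs⟩ => ?_)
  exact ⟨(mul_pos (hsub hs) hfs).ne', Icc_subset_Icc ha.le hb.le hs⟩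

noncomputable def fracPoly {n : ℕ} (α : Fin n → ℝ) (s : ℝ) : ℝ :=
  ∑ l : Fin n, α l * s ^ (((l : ℕ) : ℝ) / 2)

section fracPoly

variable {n : ℕ}

theorem continuous_fracPoly_uncurry : Continuous fun p : (Fin n → ℝ) × ℝ => fracPoly p.1 p.2 :=
  continuous_finsetSum _ fun l _ => ((continuous_apply l).comp continuous_fst).mul
    ((continuous_rpow_const (by positivity)).comp continuous_snd)

theorem continuous_fracPoly (α : Fin n → ℝ) : Continuous (fracPoly α) :=
  continuous_fracPoly_uncurry.comp (Continuous.prodMk_right α)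

theorem fracPoly_smul (t : ℝ) (α : Fin n → ℝ) (s : ℝ) : fracPoly (t • α) s = t * fracPoly α s := by
  simp [fracPoly, Finset.mul_sum, mul_assoc]

theorem fracPoly_sq_eq_eval {u : ℝ} (hu : 0 ≤ u) (α : Fin n → ℝ) :
    fracPoly α (u ^ 2) = (∑ l : Fin n, C (α l) * X ^ (l : ℕ)).eval u := by
  simp only [fracPoly, eval_finsetSum, eval_mul, eval_C, eval_pow, eval_X]
  refine Finset.sum_congr rfl fun l _ => ?_
  rw [← rpow_natCast u 2, ← rpow_mul hu, ← rpow_natCast u l]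
  congr 2
  ring

theorem exists_fracPoly_ne_zero {α : Fin n → ℝ} (hα : α ≠ 0) :
    ∃ s ∈ Icc (0 : ℝ) 1, fracPoly α s ≠ 0 := by
  set P : ℝ[X] := ∑ l : Fin n, C (α l) * X ^ (l : ℕ)
  have hP : P ≠ 0 := by
    refine fun hP => hα (funext fun j => ?_)
    simpa [P, finsetSum_coeff, coeff_C_mul_X_pow, Fin.val_inj] using congrArg (coeff · j) hP
  obtain ⟨u, hu, hPu⟩ : ∃ u ∈ Icc (0 : ℝ) 1, ¬ P.IsRoot u := by
    by_contra! h
    exact hP (P.eq_zero_of_infinite_isRoot ((Icc_infinite zero_lt_one).mono h))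
  exact ⟨u ^ 2, ⟨sq_nonneg u, pow_le_one₀ hu.1 hu.2⟩, by rwa [fracPoly_sq_eq_eval hu.1]⟩

theorem sum_mul_moment_eq_integral_fracPoly_mul {f : ℝ → ℝ} (hf_int : IntegrableOn f (Icc 0 1))
    {m : Fin n → ℝ} (hm : ∀ k, m k = ∫ s in Icc (0 : ℝ) 1, s ^ (((k : ℕ) : ℝ) / 2) * f s)
    (α : Fin n → ℝ) : ∑ k, α k * m k = ∫ s in Icc 0 1, fracPoly α s * f s := by
  have hint : ∀ k : Fin n, IntegrableOn (fun s => α k * s ^ (((k : ℕ) : ℝ) / 2) * f s) (Icc 0 1) :=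
    fun k => hf_int.continuousOn_mul
      (continuous_const.mul (continuous_rpow_const (by positivity))).continuousOn isCompact_Icc
  simp_rw [hm, ← integral_const_mul, ← mul_assoc]
  rw [← integral_finsetSum _ fun k _ => hint k]
  simp [fracPoly, Finset.sum_mul]

theorem max_integral_negPart_fracPoly_sum_mul_moment_pos {f : ℝ → ℝ}
    (hf_int : IntegrableOn f (Icc 0 1)) (hf_nonneg : ∀ s ∈ Icc (0 : ℝ) 1, 0 ≤ f s)
    (hf_pos : PosOnSubintervals f) {m : Fin n → ℝ}
    (hm : ∀ k, m k = ∫ s in Icc (0 : ℝ) 1, s ^ (((k : ℕ) : ℝ) / 2) * f s)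
    {α : Fin n → ℝ} (hα : α ≠ 0) :
    0 < max (∫ s in Icc 0 1, (fracPoly α s)⁻) (∑ k, α k * m k) := by
  by_contra! h
  obtain ⟨hneg, hmoment⟩ := max_le_iff.1 h
  have hQ : ∀ s ∈ Icc (0 : ℝ) 1, 0 ≤ fracPoly α s :=
    nonneg_of_setIntegral_Icc_negPart_eq_zero (continuous_fracPoly α) zero_ne_one
      (hneg.antisymm (setIntegral_nonneg measurableSet_Icc fun s _ => negPart_nonneg _))
  obtain ⟨s₀, hs₀, hne⟩ := exists_fracPoly_ne_zero hα
  have := setIntegral_Icc_mul_pos hf_int hf_nonneg hf_pos (continuous_fracPoly α) hQ hs₀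
    ((hQ s₀ hs₀).lt_of_ne' hne)
  rw [← sum_mul_moment_eq_integral_fracPoly_mul hf_int hm] at this
  linarith

end fracPoly

noncomputable def dualPotential {n : ℕ} (m lam : Fin n → ℝ) : ℝ :=
  (∫ S in Icc (0 : ℝ) 1, exp (-fracPoly lam S)) + ∑ k, lam k * m k

section dualPotential

variable {n : ℕ}

theorem continuous_dualPotential (m : Fin n → ℝ) : Continuous (dualPotential m) :=
  (continuous_parametric_integral_of_continuous (f := fun lam S => exp (-fracPoly lam S))
    (continuous_exp.comp continuous_fracPoly_uncurry.neg) isCompact_Icc).add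
    (continuous_finsetSum _ fun k _ => (continuous_apply k).mul continuous_const)

theorem le_dualPotential {K : ℝ} (hK : 1 ≤ K) (m lam : Fin n → ℝ) :
    K * (∫ s in Icc 0 1, (fracPoly lam s)⁻) + ∑ k, lam k * m k - K * log K ≤
      dualPotential m lam := by
  have : IsProbabilityMeasure (volume.restrict (Icc (0 : ℝ) 1)) := ⟨by simp⟩
  have := mul_integral_negPart_sub_le_integral_exp (μ := volume.restrict (Icc (0 : ℝ) 1))
    (continuous_negPart.comp (continuous_fracPoly lam)).integrableOn_Icc
    (continuous_exp.comp (continuous_fracPoly lam).neg).integrableOn_Icc hK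
  rw [dualPotential]
  linarith

theorem tendsto_dualPotential [NeZero n] {f : ℝ → ℝ} (hf_int : IntegrableOn f (Icc 0 1))
    (hf_nonneg : ∀ s ∈ Icc (0 : ℝ) 1, 0 ≤ f s) (hf_pos : PosOnSubintervals f) {m : Fin n → ℝ}
    (hm : ∀ k, m k = ∫ s in Icc (0 : ℝ) 1, s ^ (((k : ℕ) : ℝ) / 2) * f s) :
    Tendsto (dualPotential m) (comap norm atTop) atTop := by
  obtain ⟨c, hc, K, hK, hbound⟩ := exists_mul_norm_le_of_posHomogeneous
    (p := fun lam : Fin n → ℝ => ∫ s in Icc 0 1, (fracPoly lam s)⁻)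
    (M := fun lam => ∑ k, lam k * m k)
    (continuous_parametric_integral_of_continuous (f := fun lam s => (fracPoly lam s)⁻)
      (continuous_negPart.comp continuous_fracPoly_uncurry) isCompact_Icc)
    (continuous_finsetSum _ fun k _ => (continuous_apply k).mul continuous_const)
    (fun lam => setIntegral_nonneg measurableSet_Icc fun s _ => negPart_nonneg _)
    (fun t ht lam => by simp_rw [fracPoly_smul, negPart_mul_of_nonneg ht, integral_const_mul])
    (fun t _ lam => by simp [Finset.mul_sum, mul_assoc])
    (fun α hα => max_integral_negPart_fracPoly_sum_mul_moment_pos hf_int hf_nonneg hf_pos hm hα)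
  refine tendsto_atTop_mono (f := fun lam => c * ‖lam‖ - K * log K)
    (fun lam => by linarith [hbound lam, le_dualPotential hK m lam]) ?_
  exact tendsto_atTop_add_const_right _ _ (tendsto_comap.const_mul_atTop hc)

end dualPotential

/-- The dual potential `G` of the fractional-moment maximum entropy problem, for a moment
vector in the interior of the moment space (represented by a nonnegative density `f` which is
positive on a set of positive measure in every subinterval), is continuous and coercive:
`G(λ) → +∞` as `‖λ‖ → +∞`. -/
theorem maxEntropy_dual_potential_continuous_coercive (N : ℕ)
    (f : ℝ → ℝ) (hf_int : IntegrableOn f (Set.Icc (0 : ℝ) 1))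
    (hf_nonneg : ∀ s ∈ Set.Icc (0 : ℝ) 1, 0 ≤ f s)
    (hf_pos : ∀ a b : ℝ, 0 ≤ a → a < b → b ≤ 1 →
      0 < volume {s ∈ Set.Icc a b | 0 < f s})
    (m : Fin (N + 1) → ℝ)
    (hm : ∀ k : Fin (N + 1),
      m k = ∫ s in Set.Icc (0 : ℝ) 1, s ^ (((k : ℕ) : ℝ) / 2) * f s) :
    Continuous (fun lam : Fin (N + 1) → ℝ =>
      (∫ S in Set.Icc (0 : ℝ) 1,
        Real.exp (-∑ l : Fin (N + 1), lam l * S ^ (((l : ℕ) : ℝ) / 2))) +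
      ∑ k : Fin (N + 1), lam k * m k) ∧
    Tendsto (fun lam : Fin (N + 1) → ℝ =>
      (∫ S in Set.Icc (0 : ℝ) 1,
        Real.exp (-∑ l : Fin (N + 1), lam l * S ^ (((l : ℕ) : ℝ) / 2))) +
      ∑ k : Fin (N + 1), lam k * m k)
      (comap norm atTop) atTop :=
  ⟨continuous_dualPotential m, tendsto_dualPotential hf_int hf_nonneg hf_pos hm⟩
end
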